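/- arXiv:2502.18804 — 8 statements merged into one kernel-verified Lean document; each statement's English description precedes it below -/
import Mathlib

section
/- Let (A, [·,·], α) be a multiplicative Hom-Lie algebra. Define a trilinear bracket by ⟨x,y,z⟩ = [[x,y], α(z)]. Then (A, [·,·], ⟨·,·,·⟩, α) is a multiplicative Hom-Lie-Yamaguti algebra. -/
namespace HLYPaper

variable (K : Type*) [CommRing K]
variable {A V : Type*} [AddCommGroup A] [Module K A] [AddCommGroup V] [Module K V]

/-- A bilinear map (as a plain function). -/
def IsBilin (f : A → A → V) : Prop :=
  (∀ y, IsLinearMap K fun x => f x y) ∧ ∀ x, IsLinearMap K (f x)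

/-- A trilinear map (as a plain function). -/
def IsTrilin (f : A → A → A → V) : Prop :=
  (∀ y z, IsLinearMap K fun x => f x y z) ∧ (∀ x z, IsLinearMap K fun y => f x y z) ∧
    ∀ x y, IsLinearMap K (f x y)

/-- Hom-Lie algebra. -/
structure IsHomLie (b : A → A → A) (α : A → A) : Prop where
  lin : IsLinearMap K α
  bilin : IsBilin K b
  skew : ∀ x y, b x y = - b y x
  jacobi : ∀ x y z, b (α x) (b y z) + b (α y) (b z x) + b (α z) (b x y) = 0

/-- Multiplicative Hom-Lie algebra. -/
structure IsMultHomLie (b : A → A → A) (α : A → A) extends IsHomLie K b α : Prop where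
  mult : ∀ x y, α (b x y) = b (α x) (α y)

/-- Hom-Lie-Yamaguti algebra. -/
structure IsHLY (b : A → A → A) (t : A → A → A → A) (α : A → A) : Prop where
  lin : IsLinearMap K α
  bilin : IsBilin K b
  trilin : IsTrilin K t
  skew₂ : ∀ x y, b x y = - b y x
  skew₃ : ∀ x y z, t x y z = - t y x z
  ly1 : ∀ x y z,
    (b (b x y) (α z) + b (b y z) (α x) + b (b z x) (α y)) +
      (t x y z + t y z x + t z x y) = 0
  ly2 : ∀ x y z w,
    t (b x y) (α z) (α w) + t (b y z) (α x) (α w) + t (b z x) (α y) (α w) = 0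
  ly3 : ∀ x y z w,
    t (α x) (α y) (b z w) = b (t x y z) (α (α w)) + b (α (α z)) (t x y w)
  ly4 : ∀ x y z w u,
    t (α (α x)) (α (α y)) (t z w u) =
      t (t x y z) (α (α w)) (α (α u)) + t (α (α z)) (t x y w) (α (α u)) +
        t (α (α z)) (α (α w)) (t x y u)

/-- Multiplicative Hom-Lie-Yamaguti algebra. -/
structure IsMultHLY (b : A → A → A) (t : A → A → A → A) (α : A → A)
    extends IsHLY K b t α : Prop where
  mult₂ : ∀ x y, α (b x y) = b (α x) (α y)
  mult₃ : ∀ x y z, α (t x y z) = t (α x) (α y) (α z)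

/-- Representation of a Hom-Lie algebra. -/
structure IsHomLieRep (b : A → A → A) (α : A → A) (ρ : A → V → V) (β : V → V) : Prop where
  linβ : IsLinearMap K β
  linρ : ∀ v, IsLinearMap K fun x => ρ x v
  linρ' : ∀ x, IsLinearMap K (ρ x)
  comm : ∀ x v, ρ (α x) (β v) = β (ρ x v)
  rep : ∀ x y v, ρ (b x y) (β v) = ρ (α x) (ρ y v) - ρ (α y) (ρ x v)

/-- The operator `D(x,y)` built from `ρ` and `θ`. -/
def Dop (b : A → A → A) (α : A → A) (β : V → V) (ρ : A → V → V) (θ : A → A → V → V)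
    (x y : A) (v : V) : V :=
  θ y x v - θ x y v + ρ (α x) (ρ y v) - ρ (α y) (ρ x v) - ρ (b x y) (β v)

/-- Representation of a Hom-Lie-Yamaguti algebra. -/
structure IsHLYRep (b : A → A → A) (t : A → A → A → A) (α : A → A)
    (ρ : A → V → V) (θ : A → A → V → V) (β : V → V) : Prop where
  linβ : IsLinearMap K β
  linρ : ∀ v, IsLinearMap K fun x => ρ x v
  linρ' : ∀ x, IsLinearMap K (ρ x)
  linθ : ∀ z v, IsLinearMap K fun x => θ x z v
  linθ' : ∀ x v, IsLinearMap K fun z => θ x z v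
  linθ'' : ∀ x z, IsLinearMap K (θ x z)
  rl1 : ∀ x v, ρ (α x) (β v) = β (ρ x v)
  rl1' : ∀ x y v, θ (α x) (α y) (β v) = β (θ x y v)
  rl5 : ∀ x1 x2 x3 v,
    Dop b α β ρ θ (b x1 x2) (α x3) v + Dop b α β ρ θ (b x2 x3) (α x1) v +
      Dop b α β ρ θ (b x3 x1) (α x2) v = 0
  rl6 : ∀ x1 x2 y1 v,
    θ (b x1 x2) (α y1) (β v) = θ (α x1) (α y1) (ρ x2 v) - θ (α x2) (α y1) (ρ x1 v)
  rl7 : ∀ x1 x2 y2 v,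
    Dop b α β ρ θ (α x1) (α x2) (ρ y2 v) =
      ρ (α (α y2)) (Dop b α β ρ θ x1 x2 v) + ρ (t x1 x2 y2) (β v)
  rl8 : ∀ x1 y1 y2 v,
    θ (α x1) (b y1 y2) (β v) = ρ (α (α y1)) (θ x1 y2 v) - ρ (α (α y2)) (θ x1 y1 v)
  rl9 : ∀ x1 x2 y1 y2 v,
    Dop b α β ρ θ (α (α x1)) (α (α x2)) (θ y1 y2 v) =
      θ (α (α y1)) (α (α y2)) (Dop b α β ρ θ x1 x2 v) +
        θ (t x1 x2 y1) (α (α y2)) (β (β v)) + θ (α (α y1)) (t x1 x2 y2) (β (β v))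
  rl10 : ∀ x1 y1 y2 y3 v,
    θ (α (α x1)) (t y1 y2 y3) (β (β v)) =
      θ (α (α y2)) (α (α y3)) (θ x1 y1 v) - θ (α (α y1)) (α (α y3)) (θ x1 y2 v) +
        Dop b α β ρ θ (α (α y1)) (α (α y2)) (θ x1 y3 v)

/-- 2-cocycle on a Hom-Lie algebra with coefficients in a representation. -/
structure Is2CocycleLie (b : A → A → A) (α : A → A) (ρ : A → V → V) (β : V → V)
    (F : A → A → V) : Prop where
  bilin : IsBilin K F
  skew : ∀ x y, F x y = - F y x
  cocycle : ∀ x y z,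
    (ρ (α x) (F y z) + F (α x) (b y z)) + (ρ (α y) (F z x) + F (α y) (b z x)) +
      (ρ (α z) (F x y) + F (α z) (b x y)) = 0

/-- (2,3)-cocycle of a Hom-Lie-Yamaguti algebra. -/
structure Is23Cocycle (b : A → A → A) (t : A → A → A → A) (α : A → A)
    (ρ : A → V → V) (θ : A → A → V → V) (β : V → V)
    (F : A → A → V) (G : A → A → A → V) : Prop where
  bilinF : IsBilin K F
  trilinG : IsTrilin K G
  skewF : ∀ x y, F x y = - F y x
  skewG : ∀ x y z, G x y z = - G y x z
  compatF : ∀ x y, F (α x) (α y) = β (F x y)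
  compatG : ∀ x y z, G (α x) (α y) (α z) = β (G x y z)
  c1 : ∀ x y z,
    (F (b x y) (α z) - ρ (α x) (F y z) + G x y z) +
      (F (b y z) (α x) - ρ (α y) (F z x) + G y z x) +
      (F (b z x) (α y) - ρ (α z) (F x y) + G z x y) = 0
  c2 : ∀ x y z w,
    (θ (α x) (α w) (F y z) + G (b x y) (α z) (α w)) +
      (θ (α y) (α w) (F z x) + G (b y z) (α x) (α w)) +
      (θ (α z) (α w) (F x y) + G (b z x) (α y) (α w)) = 0
  c3 : ∀ x y z w,
    Dop b α β ρ θ (α x) (α y) (F z w) + ρ (α (α w)) (G x y z) - F (t x y z) (α (α w)) +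
      G (α x) (α y) (b z w) - ρ (α (α z)) (G x y w) - F (α (α z)) (t x y w) = 0
  c4 : ∀ x1 x2 x3 x4 z,
    θ (α (α x4)) (α (α z)) (G x1 x2 x3) - θ (α (α x3)) (α (α z)) (G x1 x2 x4) +
      Dop b α β ρ θ (α (α x1)) (α (α x2)) (G x3 x4 z) -
      Dop b α β ρ θ (α (α x3)) (α (α x4)) (G x1 x2 z) -
      G (t x1 x2 x3) (α (α x4)) (α (α z)) - G (α (α x3)) (t x1 x2 x4) (α (α z)) +
      G (α (α x1)) (α (α x2)) (t x3 x4 z) - G (α (α x3)) (α (α x4)) (t x1 x2 z) = 0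

/-- (F,G)-twisted O-operator on a Hom-Lie-Yamaguti algebra. -/
structure IsTwistedO (b : A → A → A) (t : A → A → A → A) (α : A → A)
    (ρ : A → V → V) (θ : A → A → V → V) (β : V → V)
    (F : A → A → V) (G : A → A → A → V) (T : V → A) : Prop where
  lin : IsLinearMap K T
  comm : ∀ u, T (β u) = α (T u)
  bin : ∀ u v, b (T u) (T v) = T (ρ (T u) v - ρ (T v) u + F (T u) (T v))
  tern : ∀ u v w, t (T u) (T v) (T w) =
    T (Dop b α β ρ θ (T u) (T v) w + θ (T v) (T w) u - θ (T u) (T w) v +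
        G (T u) (T v) (T w))

/-- F-twisted O-operator on a Hom-Lie algebra. -/
structure IsTwistedOLie (b : A → A → A) (α : A → A) (ρ : A → V → V) (β : V → V)
    (F : A → A → V) (T : V → A) : Prop where
  lin : IsLinearMap K T
  comm : ∀ u, T (β u) = α (T u)
  bin : ∀ u v, b (T u) (T v) = T (ρ (T u) v - ρ (T v) u + F (T u) (T v))

/-- (λ,μ)-weighted Reynolds operator on a Hom-Lie-Yamaguti algebra. -/
structure IsReynolds (b : A → A → A) (t : A → A → A → A) (α : A → A)
    (lam mu : K) (R : A → A) : Prop where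
  lin : IsLinearMap K R
  comm : ∀ x, R (α x) = α (R x)
  bin : ∀ x y, b (R x) (R y) = R (b (R x) y + b x (R y) + lam • b (R x) (R y))
  tern : ∀ x y z, t (R x) (R y) (R z) =
    R (t (R x) (R y) z + t (R x) y (R z) + t x (R y) (R z) + mu • t (R x) (R y) (R z))

/-- Rota-Baxter operator of weight zero on a Hom-Lie-Yamaguti algebra. -/
structure IsRotaBaxter (b : A → A → A) (t : A → A → A → A) (α : A → A)
    (R : A → A) : Prop where
  lin : IsLinearMap K R
  comm : ∀ x, R (α x) = α (R x)
  bin : ∀ x y, b (R x) (R y) = R (b (R x) y + b x (R y))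
  tern : ∀ x y z, t (R x) (R y) (R z) =
    R (t (R x) (R y) z + t (R x) y (R z) + t x (R y) (R z))

/-- λ-weighted Reynolds operator on a Hom-Lie algebra. -/
structure IsReynoldsLie (b : A → A → A) (α : A → A) (lam : K) (R : A → A) : Prop where
  lin : IsLinearMap K R
  comm : ∀ x, R (α x) = α (R x)
  bin : ∀ x y, b (R x) (R y) = R (b (R x) y + b x (R y) + lam • b (R x) (R y))

/-- The binary bracket induced by a twisted O-operator on `V`. -/
def bT (ρ : A → V → V) (F : A → A → V) (T : V → A) (u v : V) : V :=
  ρ (T u) v - ρ (T v) u + F (T u) (T v)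

/-- The ternary bracket induced by a twisted O-operator on `V`. -/
def tT (b : A → A → A) (α : A → A) (β : V → V) (ρ : A → V → V) (θ : A → A → V → V)
    (G : A → A → A → V) (T : V → A) (u v w : V) : V :=
  Dop b α β ρ θ (T u) (T v) w + θ (T v) (T w) u - θ (T u) (T w) v + G (T u) (T v) (T w)

/-- The map `ρ_T` of the representation of `(V,[·,·]_T,⟨·,·,·⟩_T,β)` on `A`. -/
def rhoT (b : A → A → A) (ρ : A → V → V) (F : A → A → V) (T : V → A)
    (u : V) (x : A) : A :=
  b (T u) x + T (ρ x u + F x (T u))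

/-- The map `θ_T` of the representation of `(V,[·,·]_T,⟨·,·,·⟩_T,β)` on `A`. -/
def thetaT (b : A → A → A) (t : A → A → A → A) (α : A → A) (β : V → V)
    (ρ : A → V → V) (θ : A → A → V → V) (G : A → A → A → V) (T : V → A)
    (u v : V) (x : A) : A :=
  t x (T u) (T v) - T (Dop b α β ρ θ x (T u) v - θ x (T v) u + G x (T u) (T v))

/-- The 1-coboundary `∂_T(χ)` associated to `χ ∈ A∧A`. -/
def partialT (b : A → A → A) (t : A → A → A → A) (α : A → A) (β : V → V)
    (ρ : A → V → V) (θ : A → A → V → V) (G : A → A → A → V)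
    (T : V → A) (χ : A × A) (u : V) : A :=
  T (Dop b α β ρ θ χ.1 χ.2 u + G χ.1 χ.2 (T u)) - t χ.1 χ.2 (T u)

/-- Formal deformation of a twisted O-operator, encoded by its coefficients. -/
def IsFormalDef (b : A → A → A) (t : A → A → A → A) (α : A → A)
    (ρ : A → V → V) (θ : A → A → V → V) (β : V → V)
    (F : A → A → V) (G : A → A → A → V) (S : ℕ → V → A) : Prop :=
  (∀ s, IsLinearMap K (S s)) ∧
  (∀ s u, S s (β u) = α (S s u)) ∧
  (∀ s u v, ∑ p ∈ Finset.HasAntidiagonal.antidiagonal s, b (S p.1 u) (S p.2 v) =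
    (∑ p ∈ Finset.HasAntidiagonal.antidiagonal s, S p.1 (ρ (S p.2 u) v - ρ (S p.2 v) u)) +
    ∑ p ∈ Finset.HasAntidiagonal.antidiagonal s, ∑ q ∈ Finset.HasAntidiagonal.antidiagonal p.2,
      S p.1 (F (S q.1 u) (S q.2 v))) ∧
  (∀ s u v w,
    ∑ p ∈ Finset.HasAntidiagonal.antidiagonal s, ∑ q ∈ Finset.HasAntidiagonal.antidiagonal p.2,
      t (S p.1 u) (S q.1 v) (S q.2 w) =
    (∑ p ∈ Finset.HasAntidiagonal.antidiagonal s, ∑ q ∈ Finset.HasAntidiagonal.antidiagonal p.2,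
      S p.1 (Dop b α β ρ θ (S q.1 u) (S q.2 v) w + θ (S q.1 v) (S q.2 w) u -
        θ (S q.1 u) (S q.2 w) v)) +
    ∑ p ∈ Finset.HasAntidiagonal.antidiagonal s, ∑ q ∈ Finset.HasAntidiagonal.antidiagonal p.2,
      ∑ r ∈ Finset.HasAntidiagonal.antidiagonal q.2,
        S p.1 (G (S q.1 u) (S r.1 v) (S r.2 w)))

/-- `x * y = x∘y − y∘x + x⋎y`, the sub-adjacent binary bracket of an NS-structure. -/
def nsStar (circ vee : A → A → A) (x y : A) : A := circ x y - circ y x + vee x y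

/-- `{x,y,z}^∧` of an NS-Hom-Lie-Yamaguti algebra. -/
def nsHat (circ vee : A → A → A) (br : A → A → A → A) (α : A → A) (x y z : A) : A :=
  br z y x - br z x y + circ (α x) (circ y z) - circ (α y) (circ x z) -
    circ (nsStar circ vee x y) (α z)

/-- `⟨x,y,z⟩`, the sub-adjacent ternary bracket of an NS-structure. -/
def nsAng (circ vee : A → A → A) (br sq : A → A → A → A) (α : A → A) (x y z : A) : A :=
  nsHat circ vee br α x y z + br x y z - br y x z + sq x y z

/-- NS-Hom-Lie-Yamaguti algebra. -/
structure IsNSHLY (circ vee : A → A → A) (br sq : A → A → A → A) (α : A → A) : Prop where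
  linα : IsLinearMap K α
  lincirc : IsBilin K circ
  linvee : IsBilin K vee
  linbr : IsTrilin K br
  linsq : IsTrilin K sq
  skewvee : ∀ x y, vee x y = - vee y x
  ns1 : ∀ x1 x2 x3,
    (vee (nsStar circ vee x1 x2) (α x3) - circ (α x1) (vee x2 x3) + sq x1 x2 x3) +
    (vee (nsStar circ vee x2 x3) (α x1) - circ (α x2) (vee x3 x1) + sq x2 x3 x1) +
    (vee (nsStar circ vee x3 x1) (α x2) - circ (α x3) (vee x1 x2) + sq x3 x1 x2) = 0
  ns2 : ∀ x1 x2 x3 x4,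
    (br (vee x2 x3) (α x1) (α x4) + sq (nsStar circ vee x1 x2) (α x3) (α x4)) +
    (br (vee x3 x1) (α x2) (α x4) + sq (nsStar circ vee x2 x3) (α x1) (α x4)) +
    (br (vee x1 x2) (α x3) (α x4) + sq (nsStar circ vee x3 x1) (α x2) (α x4)) = 0
  ns3 : ∀ x1 x2 x3 x4,
    br (nsStar circ vee x1 x2) (α x3) (α x4) + br (nsStar circ vee x2 x3) (α x1) (α x4) +
      br (nsStar circ vee x3 x1) (α x2) (α x4) = 0
  ns4 : ∀ x1 x2 x3 x4,
    br (α x4) (nsStar circ vee x1 x2) (α x3) =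
      br (circ x2 x4) (α x1) (α x3) - br (circ x1 x4) (α x2) (α x3)
  ns5 : ∀ x1 x2 x3 x4,
    nsHat circ vee br α (α x1) (α x2) (circ x3 x4) =
      circ (α (α x3)) (nsHat circ vee br α x1 x2 x4) +
        circ (nsAng circ vee br sq α x1 x2 x3) (α (α x4))
  ns6 : ∀ x1 x2 x3 x4,
    br (α x4) (α x1) (nsStar circ vee x2 x3) =
      circ (α (α x2)) (br x4 x1 x3) - circ (α (α x3)) (br x4 x1 x2)
  ns7 : ∀ x1 x2 x3 x4 x5,
    nsHat circ vee br α (α (α x1)) (α (α x2)) (br x5 x3 x4) =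
      br (nsHat circ vee br α x1 x2 x5) (α (α x3)) (α (α x4)) +
        br (α (α x5)) (nsAng circ vee br sq α x1 x2 x3) (α (α x4)) +
        br (α (α x5)) (α (α x3)) (nsAng circ vee br sq α x1 x2 x4)
  ns8 : ∀ x1 x2 x3 x4 x5,
    br (α (α x5)) (α (α x1)) (nsAng circ vee br sq α x2 x3 x4) =
      br (br x5 x1 x2) (α (α x3)) (α (α x4)) - br (br x5 x1 x3) (α (α x2)) (α (α x4)) +
        nsHat circ vee br α (α (α x2)) (α (α x3)) (br x5 x1 x4)
  ns9 : ∀ x1 x2 x3 x4,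
    nsHat circ vee br α (α x1) (α x2) (vee x3 x4) +
      circ (α (α x4)) (sq x1 x2 x3) - vee (nsAng circ vee br sq α x1 x2 x3) (α (α x4)) +
      sq (α x1) (α x2) (nsStar circ vee x3 x4) - circ (α (α x3)) (sq x1 x2 x4) -
      vee (α (α x3)) (nsAng circ vee br sq α x1 x2 x4) = 0
  ns10 : ∀ x1 x2 x3 x4 x5,
    nsHat circ vee br α (sq x1 x2 x3) (α (α x4)) (α (α x5)) -
      br (sq x1 x2 x4) (α (α x3)) (α (α x5)) +
      nsHat circ vee br α (sq x3 x4 x5) (α (α x1)) (α (α x2)) -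
      nsHat circ vee br α (sq x1 x2 x5) (α (α x3)) (α (α x4)) -
      sq (nsAng circ vee br sq α x1 x2 x3) (α (α x4)) (α (α x5)) -
      sq (α (α x3)) (nsAng circ vee br sq α x1 x2 x4) (α (α x5)) +
      sq (α (α x1)) (α (α x2)) (nsAng circ vee br sq α x3 x4 x5) -
      sq (α (α x3)) (α (α x4)) (nsAng circ vee br sq α x1 x2 x5) = 0

/-- NS-Hom-Lie algebra. -/
structure IsNSHomLie (circ vee : A → A → A) (α : A → A) : Prop where
  linα : IsLinearMap K α
  lincirc : IsBilin K circ
  linvee : IsBilin K vee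
  skewvee : ∀ x y, vee x y = - vee y x
  nsl1 : ∀ x y z,
    circ (nsStar circ vee x y) (α z) - circ (α x) (circ y z) + circ (α y) (circ x z) = 0
  nsl2 : ∀ x y z,
    vee (α x) (nsStar circ vee y z) + vee (α y) (nsStar circ vee z x) +
      vee (α z) (nsStar circ vee x y) +
      circ (α x) (vee y z) + circ (α y) (vee z x) + circ (α z) (vee x y) = 0

/-!
With skew-symmetry, Hom-Jacobi says that `ad (α u)` is an `α`-twisted derivation of the bracket.
Its cyclic form gives (i) and, bracketed with `α² w`, (ii). Multiplicativity turns
`⟨α x, α y, -⟩` into `ad (α [x,y])`, so (iii) is the derivation rule once, and (iv) is the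
derivation rule for `ad (α² [x,y])` followed by the rule for `ad (α [x,y])` inside.
-/

section InducedHLY

variable {K}

theorem IsBilin.map_add_left {f : A → A → V} (hf : IsBilin K f) (x x' y : A) :
    f (x + x') y = f x y + f x' y :=
  (hf.1 y).map_add x x'

theorem IsBilin.map_zero_left {f : A → A → V} (hf : IsBilin K f) (y : A) : f 0 y = 0 :=
  (hf.1 y).map_zero

theorem IsBilin.map_neg_left {f : A → A → V} (hf : IsBilin K f) (x y : A) :
    f (-x) y = - f x y :=
  (hf.1 y).map_neg x

theorem IsBilin.map_neg_right {f : A → A → V} (hf : IsBilin K f) (x y : A) :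
    f x (-y) = - f x y :=
  (hf.2 x).map_neg y

theorem IsBilin.isTrilin_comp {f : A → A → V} {g : A → A → A} {α : A → A}
    (hf : IsBilin K f) (hg : IsBilin K g) (hα : IsLinearMap K α) :
    IsTrilin K fun x y z => f (g x y) (α z) :=
  ⟨fun y z => ((IsLinearMap.mk' _ (hf.1 (α z))).comp (IsLinearMap.mk' _ (hg.1 y))).isLinear,
    fun x z => ((IsLinearMap.mk' _ (hf.1 (α z))).comp (IsLinearMap.mk' _ (hg.2 x))).isLinear,
    fun x y => ((IsLinearMap.mk' _ (hf.2 (g x y))).comp (IsLinearMap.mk' _ hα)).isLinear⟩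

def homLieTernary (b : A → A → A) (α : A → A) (x y z : A) : A := b (b x y) (α z)

variable {b : A → A → A} {α : A → A}

namespace IsHomLie

theorem cyclic_bracket_bracket_alpha (h : IsHomLie K b α) (x y z : A) :
    b (b x y) (α z) + b (b y z) (α x) + b (b z x) (α y) = 0 := by
  rw [h.skew (b x y), h.skew (b y z), h.skew (b z x)]
  linear_combination (norm := abel) -h.jacobi x y z

theorem bracket_alpha_leibniz (h : IsHomLie K b α) (u p q : A) :
    b (α u) (b p q) = b (b u p) (α q) + b (α p) (b u q) := by
  have hp : b (α p) (b q u) = - b (α p) (b u q) := by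
    rw [h.skew q u, h.bilin.map_neg_right]
  have hq : b (α q) (b u p) = - b (b u p) (α q) := h.skew _ _
  linear_combination (norm := abel) h.jacobi u p q - hp - hq

end IsHomLie

namespace IsMultHomLie

theorem homLieTernary_leibniz_bracket (h : IsMultHomLie K b α) (x y z w : A) :
    homLieTernary b α (α x) (α y) (b z w) =
      b (homLieTernary b α x y z) (α (α w)) + b (α (α z)) (homLieTernary b α x y w) := by
  unfold homLieTernary
  rw [← h.mult x y, h.mult z w]
  exact h.bracket_alpha_leibniz (b x y) (α z) (α w)

theorem homLieTernary_leibniz_homLieTernary (h : IsMultHomLie K b α) (x y z w u : A) :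
    homLieTernary b α (α (α x)) (α (α y)) (homLieTernary b α z w u) =
      homLieTernary b α (homLieTernary b α x y z) (α (α w)) (α (α u)) +
        homLieTernary b α (α (α z)) (homLieTernary b α x y w) (α (α u)) +
        homLieTernary b α (α (α z)) (α (α w)) (homLieTernary b α x y u) := by
  unfold homLieTernary
  calc b (b (α (α x)) (α (α y))) (α (b (b z w) (α u)))
      = b (α (α (b x y))) (b (b (α z) (α w)) (α (α u))) := by simp only [h.mult]
    _ = b (b (α (b x y)) (b (α z) (α w))) (α (α (α u))) +
          b (α (b (α z) (α w))) (b (α (b x y)) (α (α u))) :=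
        h.bracket_alpha_leibniz _ _ _
    _ = _ := by
        rw [h.bracket_alpha_leibniz (b x y) (α z) (α w), h.bilin.map_add_left]
        simp only [h.mult]

end IsMultHomLie

end InducedHLY

/-- A multiplicative Hom-Lie algebra with `⟨x,y,z⟩ = [[x,y],α z]` is a
multiplicative Hom-Lie-Yamaguti algebra. -/
theorem induced_multHLY (b : A → A → A) (α : A → A) (h : IsMultHomLie K b α) :
    IsMultHLY K b (fun x y z => b (b x y) (α z)) α := by
  have hcyc := h.cyclic_bracket_bracket_alpha
  show IsMultHLY K b (homLieTernary b α) α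
  exact
    { lin := h.lin
      bilin := h.bilin
      trilin := h.bilin.isTrilin_comp h.bilin h.lin
      skew₂ := h.skew
      skew₃ := fun x y z => by simp only [homLieTernary, h.skew x y, h.bilin.map_neg_left]
      ly1 := fun x y z => by simp only [homLieTernary, hcyc x y z, add_zero]
      ly2 := fun x y z w => by
        simp only [homLieTernary, ← h.bilin.map_add_left, hcyc, h.bilin.map_zero_left]
      ly3 := h.homLieTernary_leibniz_bracket
      ly4 := h.homLieTernary_leibniz_homLieTernary
      mult₂ := h.mult
      mult₃ := fun x y z => by simp only [homLieTernary, h.mult] }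

end HLYPaper
end

section
/- Let (A, [·,·], ⟨·,·,·⟩) be a Lie-Yamaguti algebra and α : A → A an algebra morphism (preserving both brackets). Then (A, α∘[·,·], α²∘⟨·,·,·⟩, α) is a multiplicative Hom-Lie-Yamaguti algebra. -/
namespace HLYPaper

variable (K : Type*) [CommRing K]
variable {A V : Type*} [AddCommGroup A] [Module K A] [AddCommGroup V] [Module K V]

theorem _root_.IsLinearMap.linearMap_comp {R M N P : Type*} [Semiring R] [AddCommMonoid M]
    [AddCommMonoid N] [AddCommMonoid P] [Module R M] [Module R N] [Module R P] {f : M → N}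
    (hf : IsLinearMap R f) (g : N →ₗ[R] P) : IsLinearMap R fun x => g (f x) :=
  (g ∘ₗ hf.mk' f).isLinear

section YauTwist

variable {K} {W : Type*} [AddCommGroup W] [Module K W]

theorem IsBilin.linearMap_comp {f : A → A → V} (hf : IsBilin K f) (g : V →ₗ[K] W) :
    IsBilin K fun x y => g (f x y) :=
  ⟨fun y => (hf.1 y).linearMap_comp g, fun x => (hf.2 x).linearMap_comp g⟩

theorem IsTrilin.linearMap_comp {f : A → A → A → V} (hf : IsTrilin K f) (g : V →ₗ[K] W) :
    IsTrilin K fun x y z => g (f x y z) :=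
  ⟨fun y z => (hf.1 y z).linearMap_comp g, fun x z => (hf.2.1 x z).linearMap_comp g,
    fun x y => (hf.2.2 x y).linearMap_comp g⟩

variable {b : A → A → A} {t : A → A → A → A} {α : A → A}

/-- Yau twist: each twisted identity is the original one with `β`, `β²` or `β³` applied,
once `β` is pushed through both brackets and past `α`. -/
theorem IsHLY.twist (h : IsHLY K b t α) (β : A →ₗ[K] A)
    (hb : ∀ x y, β (b x y) = b (β x) (β y))
    (ht : ∀ x y z, β (t x y z) = t (β x) (β y) (β z))
    (hαβ : ∀ x, β (α x) = α (β x)) :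
    IsHLY K (fun x y => β (b x y)) (fun x y z => β (β (t x y z))) (fun x => β (α x)) where
  lin := h.lin.linearMap_comp β
  bilin := h.bilin.linearMap_comp β
  trilin := h.trilin.linearMap_comp (β ∘ₗ β)
  skew₂ x y := by rw [h.skew₂, map_neg]
  skew₃ x y z := by rw [h.skew₃, map_neg, map_neg]
  ly1 x y z := by
    simpa only [map_add, map_zero, hb, ht, hαβ] using congrArg (fun v => β (β v)) (h.ly1 x y z)
  ly2 x y z w := by
    simpa only [map_add, map_zero, hb, ht, hαβ] using
      congrArg (fun v => β (β (β v))) (h.ly2 x y z w)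
  ly3 x y z w := by
    simpa only [map_add, hb, ht, hαβ] using congrArg (fun v => β (β (β v))) (h.ly3 x y z w)
  ly4 x y z w u := by
    simpa only [map_add, ht, hαβ] using
      congrArg (fun v => β (β (β (β v)))) (h.ly4 x y z w u)

theorem IsMultHLY.twist (h : IsMultHLY K b t α) (β : A →ₗ[K] A)
    (hb : ∀ x y, β (b x y) = b (β x) (β y))
    (ht : ∀ x y z, β (t x y z) = t (β x) (β y) (β z))
    (hαβ : ∀ x, β (α x) = α (β x)) :
    IsMultHLY K (fun x y => β (b x y)) (fun x y z => β (β (t x y z))) (fun x => β (α x)) where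
  toIsHLY := h.toIsHLY.twist β hb ht hαβ
  mult₂ x y := by simp only [hb, h.mult₂, hαβ]
  mult₃ x y z := by simp only [ht, h.mult₃, hαβ]

end YauTwist

/-- twisting a Lie-Yamaguti algebra by an algebra morphism `α` gives a
multiplicative Hom-Lie-Yamaguti algebra. -/
theorem twist_LY_by_morphism (b : A → A → A) (t : A → A → A → A) (α : A → A)
    (h : IsHLY K b t (id : A → A)) (hα : IsLinearMap K α)
    (hb : ∀ x y, α (b x y) = b (α x) (α y))
    (ht : ∀ x y z, α (t x y z) = t (α x) (α y) (α z)) :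
    IsMultHLY K (fun x y => α (b x y)) (fun x y z => α (α (t x y z))) α :=
  have hid : IsMultHLY K b t id := ⟨h, fun _ _ => rfl, fun _ _ _ => rfl⟩
  hid.twist (hα.mk' α) hb ht fun _ => rfl

end HLYPaper
end

section
/- Let (A,[·,·],α) be a multiplicative Hom-Lie algebra with representation (V,ρ,β), and let F: A×A → V be a skew-symmetric 2-cocycle (i.e., the cyclic sum over (x,y,z) of ρ(α(x))F(y,z) + F(α(x),[y,z]) vanishes). Define G(x,y,z) = F([x,y],α(z)) − ρ(α(z))F(x,y). Then the pair (F,G) satisfies the first (2,3)-cocycle identity of the induced Hom-Lie-Yamaguti algebra (A,[·,·],⟨·,·,·⟩,α) with ⟨x,y,z⟩ = [[x,y],α(z)] and representation (V,ρ,θ_ρ,β): the cyclic sum over (x,y,z) of F([x,y],α(z)) − ρ(α(x))F(y,z) + G(x,y,z) vanishes. -/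
namespace HLYPaper

variable (K : Type*) [CommRing K]
variable {A V : Type*} [AddCommGroup A] [Module K A] [AddCommGroup V] [Module K V]

section

variable {K}

/-- The `G` that completes a Hom-Lie 2-cocycle `F` to the (2,3)-cocycle `(F, G)` of the
induced Hom-Lie-Yamaguti algebra. -/
def inducedG (b : A → A → A) (α : A → A) (ρ : A → V → V) (F : A → A → V) (x y z : A) : V :=
  F (b x y) (α z) - ρ (α z) (F x y)

theorem Is2CocycleLie.inducedG_cyclic_sum {b : A → A → A} {α : A → A} {ρ : A → V → V}
    {β : V → V} {F : A → A → V} (hF : Is2CocycleLie K b α ρ β F) (x y z : A) :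
    inducedG b α ρ F x y z + inducedG b α ρ F y z x + inducedG b α ρ F z x y = 0 := by
  have hc := hF.cocycle x y z
  rw [hF.skew (α x), hF.skew (α y), hF.skew (α z)] at hc
  unfold inducedG
  linear_combination (norm := abel) -hc

end

theorem cocycle23_first_identity (b : A → A → A) (α : A → A) (ρ : A → V → V) (β : V → V)
    (F : A → A → V) (hF : Is2CocycleLie K b α ρ β F) :
    ∀ x y z : A,
      (F (b x y) (α z) - ρ (α x) (F y z) + (F (b x y) (α z) - ρ (α z) (F x y))) +
      (F (b y z) (α x) - ρ (α y) (F z x) + (F (b y z) (α x) - ρ (α x) (F y z))) +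
      (F (b z x) (α y) - ρ (α z) (F x y) + (F (b z x) (α y) - ρ (α y) (F z x))) = 0 := by
  intro x y z
  have hG := hF.inducedG_cyclic_sum x y z
  unfold inducedG at hG
  -- Reindexed cyclically, the terms `F([x,y],αz) − ρ(αx)F(y,z)` sum to the cyclic sum of `G` too.
  linear_combination (norm := abel) hG + hG

end HLYPaper
end

section
/- Let R: A → A be a λ-weighted Reynolds operator on a multiplicative Hom-Lie algebra (A,[·,·],α) (i.e., R∘α = α∘R and [Rx,Ry] = R([Rx,y] + [x,Ry] + λ[Rx,Ry])). Then R is a (λ,2λ)-weighted Reynolds operator on the induced Hom-Lie-Yamaguti algebra with ternary bracket ⟨x,y,z⟩ = [[x,y],α(z)]. -/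
namespace HLYPaper

variable (K : Type*) [CommRing K]
variable {A V : Type*} [AddCommGroup A] [Module K A] [AddCommGroup V] [Module K V]

variable {K} in
/-- Writing `[R x, R y] = R S`, the Reynolds identity applied to `[R S, R (α z)]` contributes one
`lam`, and expanding `[S, α (R z)]` contributes the other. -/
theorem IsReynoldsLie.tern_of_isLinearMap_left {b : A → A → A} {α : A → A} {lam : K}
    {R : A → A} (hR : IsReynoldsLie K b α lam R)
    (hb : ∀ w, IsLinearMap K fun x => b x w) (x y z : A) :
    b (b (R x) (R y)) (α (R z)) =
      R (b (b (R x) (R y)) (α z) + b (b (R x) y) (α (R z)) + b (b x (R y)) (α (R z)) +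
        (2 * lam) • b (b (R x) (R y)) (α (R z))) := by
  set S := b (R x) y + b x (R y) + lam • b (R x) (R y)
  have hS : R S = b (R x) (R y) := (hR.bin x y).symm
  calc b (b (R x) (R y)) (α (R z))
      = b (R S) (R (α z)) := by rw [hS, hR.comm]
    _ = R (b (R S) (α z) + b S (R (α z)) + lam • b (R S) (R (α z))) := hR.bin S (α z)
    _ = _ := by
      rw [hS, hR.comm, (hb _).map_add, (hb _).map_add, (hb _).map_smul]
      congr 1
      module

/-- a λ-weighted Reynolds operator on a multiplicative Hom-Lie algebra is a
(λ,2λ)-weighted Reynolds operator on the induced Hom-Lie-Yamaguti algebra. -/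
theorem reynolds_on_induced (b : A → A → A) (α : A → A) (lam : K) (R : A → A)
    (h : IsMultHomLie K b α) (hR : IsReynoldsLie K b α lam R) :
    IsReynolds K b (fun x y z => b (b x y) (α z)) α lam (2 * lam) R :=
  ⟨hR.lin, hR.comm, hR.bin, hR.tern_of_isLinearMap_left h.bilin.1⟩

end HLYPaper
end

section
/- Let T: V → A be an F-twisted O-operator on a multiplicative Hom-Lie algebra (A,[·,·],α) with respect to a Hom-Lie representation (V,ρ,β) and a 2-cocycle F. Then T is an (F,G)-twisted O-operator on the induced Hom-Lie-Yamaguti algebra (A,[·,·],⟨·,·,·⟩,α) with ⟨x,y,z⟩ = [[x,y],α(z)], with respect to the representation (V,ρ,θ_ρ,β) where θ_ρ(x,y) = ρ(α(y))ρ(x), and with G(x,y,z) = F([x,y],α(z)) − ρ(α(z))F(x,y). -/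
namespace HLYPaper

variable (K : Type*) [CommRing K]
variable {A V : Type*} [AddCommGroup A] [Module K A] [AddCommGroup V] [Module K V]

/-!
For the induced representation `θ_ρ(x,y) = ρ(α y) ρ(x)` the representation identity collapses
`D(x,y)` to `ρ([x,y]) ∘ β`. The ternary condition is then the binary O-operator condition applied
twice: once to write `[Tu,Tv] = T[u,v]_T`, and once to the pair `([u,v]_T, β w)`, which
computes `[[Tu,Tv], α(Tw)]`.
-/

theorem IsHomLieRep.dop_induced {b : A → A → A} {α : A → A} {ρ : A → V → V} {β : V → V}
    (hr : IsHomLieRep K b α ρ β) (x y : A) (v : V) :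
    Dop b α β ρ (fun x y v => ρ (α y) (ρ x v)) x y v = ρ (b x y) (β v) := by
  simp only [Dop, hr.rep]
  abel

theorem IsTwistedOLie.bracket_bracket_alpha {b : A → A → A} {α : A → A} {ρ : A → V → V}
    {β : V → V} {F : A → A → V} {T : V → A} (hT : IsTwistedOLie K b α ρ β F T) (u v w : V) :
    b (b (T u) (T v)) (α (T w)) =
      T (ρ (b (T u) (T v)) (β w) - ρ (α (T w)) (bT ρ F T u v) +
        F (b (T u) (T v)) (α (T w))) := by
  have hbin : ∀ u v, b (T u) (T v) = T (bT ρ F T u v) := hT.bin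
  rw [← hT.comm, hbin u v, hbin, bT, ← hbin u v]

theorem twistedO_on_induced (b : A → A → A) (α : A → A) (ρ : A → V → V) (β : V → V)
    (F : A → A → V) (T : V → A) (hr : IsHomLieRep K b α ρ β)
    (hT : IsTwistedOLie K b α ρ β F T) :
    IsTwistedO K b (fun x y z => b (b x y) (α z)) α ρ
      (fun x y v => ρ (α y) (ρ x v)) β F
      (fun x y z => F (b x y) (α z) - ρ (α z) (F x y)) T := by
  refine ⟨hT.lin, hT.comm, hT.bin, fun u v w => ?_⟩
  rw [hT.bracket_bracket_alpha, hr.dop_induced, bT, (hr.linρ' _).map_add,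
    (hr.linρ' _).map_sub]
  congr 1
  abel

end HLYPaper
end

section
/- Let T_t = Σ_{i≥0} T_i t^i with T_0 = T be a formal deformation of an (F,G)-twisted O-operator T on a Hom-Lie-Yamaguti algebra. Then the linear term T_1 satisfies: β∘T_1 = T_1∘α; [T_1 u, Tv] + [Tu, T_1 v] = T_1(ρ(Tu)v − ρ(Tv)u) + T(ρ(T_1 u)v − ρ(T_1 v)u) + T_1 F(Tu,Tv) + T F(T_1 u, Tv) + T F(Tu, T_1 v); and the analogous ternary identity; i.e., T_1 is a 1-cocycle in the cohomology of the twisted O-operator T. -/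
namespace HLYPaper

variable (K : Type*) [CommRing K]
variable {A V : Type*} [AddCommGroup A] [Module K A] [AddCommGroup V] [Module K V]

theorem sum_antidiagonal_one {M : Type*} [AddCommMonoid M] (f : ℕ × ℕ → M) :
    ∑ p ∈ Finset.HasAntidiagonal.antidiagonal 1, f p = f (0, 1) + f (1, 0) := by
  rw [Finset.Nat.sum_antidiagonal_succ, Finset.Nat.antidiagonal_zero, Finset.sum_singleton]

section FormalDeformation

variable {K} {b : A → A → A} {t : A → A → A → A} {α : A → A} {ρ : A → V → V}
  {θ : A → A → V → V} {β : V → V} {F : A → A → V} {G : A → A → A → V} {S : ℕ → V → A}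

theorem IsFormalDef.map_comm (hS : IsFormalDef K b t α ρ θ β F G S) (s : ℕ) (u : V) :
    S s (β u) = α (S s u) :=
  hS.2.1 s u

theorem IsFormalDef.bracket_coeff_one (hS : IsFormalDef K b t α ρ θ β F G S) (u v : V) :
    b (S 1 u) (S 0 v) + b (S 0 u) (S 1 v) =
      S 1 (ρ (S 0 u) v - ρ (S 0 v) u) + S 0 (ρ (S 1 u) v - ρ (S 1 v) u) +
        S 1 (F (S 0 u) (S 0 v)) + S 0 (F (S 1 u) (S 0 v)) + S 0 (F (S 0 u) (S 1 v)) := by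
  have h := hS.2.2.1 1 u v
  simp only [sum_antidiagonal_one, Finset.Nat.antidiagonal_zero, Finset.sum_singleton] at h
  linear_combination (norm := abel) h

theorem IsFormalDef.ternary_coeff_one (hS : IsFormalDef K b t α ρ θ β F G S) (u v w : V) :
    t (S 1 u) (S 0 v) (S 0 w) + t (S 0 u) (S 1 v) (S 0 w) + t (S 0 u) (S 0 v) (S 1 w) =
      S 1 (Dop b α β ρ θ (S 0 u) (S 0 v) w + θ (S 0 v) (S 0 w) u - θ (S 0 u) (S 0 w) v) +
        S 0 (Dop b α β ρ θ (S 1 u) (S 0 v) w + θ (S 1 v) (S 0 w) u - θ (S 1 u) (S 0 w) v) +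
        S 0 (Dop b α β ρ θ (S 0 u) (S 1 v) w + θ (S 0 v) (S 1 w) u - θ (S 0 u) (S 1 w) v) +
        S 1 (G (S 0 u) (S 0 v) (S 0 w)) + S 0 (G (S 1 u) (S 0 v) (S 0 w)) +
        S 0 (G (S 0 u) (S 1 v) (S 0 w)) + S 0 (G (S 0 u) (S 0 v) (S 1 w)) := by
  have h := hS.2.2.2 1 u v w
  simp only [sum_antidiagonal_one, Finset.Nat.antidiagonal_zero, Finset.sum_singleton] at h
  linear_combination (norm := abel) h

end FormalDeformation

theorem infinitesimal_is_cocycle (b : A → A → A) (t : A → A → A → A) (α : A → A)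
    (ρ : A → V → V) (θ : A → A → V → V) (β : V → V) (F : A → A → V) (G : A → A → A → V)
    (T : V → A)
    (S : ℕ → V → A) (hS0 : S 0 = T)
    (hdef : IsFormalDef K b t α ρ θ β F G S) :
    (∀ u, S 1 (β u) = α (S 1 u)) ∧
    (∀ u v, b (S 1 u) (T v) + b (T u) (S 1 v) =
      S 1 (ρ (T u) v - ρ (T v) u) + T (ρ (S 1 u) v - ρ (S 1 v) u) +
        S 1 (F (T u) (T v)) + T (F (S 1 u) (T v)) + T (F (T u) (S 1 v))) ∧
    ∀ u v w,
      t (S 1 u) (T v) (T w) + t (T u) (S 1 v) (T w) + t (T u) (T v) (S 1 w) =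
        S 1 (Dop b α β ρ θ (T u) (T v) w + θ (T v) (T w) u - θ (T u) (T w) v) +
          T (Dop b α β ρ θ (S 1 u) (T v) w + θ (S 1 v) (T w) u - θ (S 1 u) (T w) v) +
          T (Dop b α β ρ θ (T u) (S 1 v) w + θ (T v) (S 1 w) u - θ (T u) (S 1 w) v) +
          S 1 (G (T u) (T v) (T w)) + T (G (S 1 u) (T v) (T w)) +
          T (G (T u) (S 1 v) (T w)) + T (G (T u) (T v) (S 1 w)) := by
  subst hS0
  exact ⟨hdef.map_comm 1, hdef.bracket_coeff_one, hdef.ternary_coeff_one⟩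

end HLYPaper
end

section
/- Let (A, ∘, ⋎, α) be an NS-Hom-Lie algebra. Then the bracket [x,y] = x∘y − y∘x + x⋎y makes (A, [·,·], α) a Hom-Lie algebra. -/
namespace HLYPaper

variable (K : Type*) [CommRing K]
variable {A V : Type*} [AddCommGroup A] [Module K A] [AddCommGroup V] [Module K V]

section Bilinear

variable {K}

theorem _root_.IsLinearMap.add {f g : A → V} (hf : IsLinearMap K f) (hg : IsLinearMap K g) :
    IsLinearMap K fun x => f x + g x :=
  (IsLinearMap.mk' f hf + IsLinearMap.mk' g hg).isLinear

theorem _root_.IsLinearMap.sub {f g : A → V} (hf : IsLinearMap K f) (hg : IsLinearMap K g) :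
    IsLinearMap K fun x => f x - g x :=
  (IsLinearMap.mk' f hf - IsLinearMap.mk' g hg).isLinear

theorem IsBilin.flip {f : A → A → V} (hf : IsBilin K f) : IsBilin K fun x y => f y x :=
  ⟨hf.2, hf.1⟩

theorem IsBilin.add {f g : A → A → V} (hf : IsBilin K f) (hg : IsBilin K g) :
    IsBilin K fun x y => f x y + g x y :=
  ⟨fun y => (hf.1 y).add (hg.1 y), fun x => (hf.2 x).add (hg.2 x)⟩

theorem IsBilin.sub {f g : A → A → V} (hf : IsBilin K f) (hg : IsBilin K g) :
    IsBilin K fun x y => f x y - g x y :=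
  ⟨fun y => (hf.1 y).sub (hg.1 y), fun x => (hf.2 x).sub (hg.2 x)⟩

theorem IsBilin.nsStar {circ vee : A → A → A} (hcirc : IsBilin K circ) (hvee : IsBilin K vee) :
    IsBilin K (nsStar circ vee) :=
  (hcirc.sub hcirc.flip).add hvee

theorem _root_.IsLinearMap.map_nsStar {f : A → V} (hf : IsLinearMap K f) (circ vee : A → A → A)
    (x y : A) : f (nsStar circ vee x y) = f (circ x y) - f (circ y x) + f (vee x y) := by
  rw [nsStar, hf.map_add, hf.map_sub]

end Bilinear

theorem nsStar_swap {circ vee : A → A → A} (hvee : ∀ x y, vee x y = - vee y x) (x y : A) :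
    nsStar circ vee x y = - nsStar circ vee y x := by
  simp only [nsStar, hvee x y]
  abel

namespace IsNSHomLie

variable {K} {circ vee : A → A → A} {α : A → A} (h : IsNSHomLie K circ vee α)
include h

theorem circ_nsStar_left (x y z : A) :
    circ (nsStar circ vee x y) (α z) = circ (α x) (circ y z) - circ (α y) (circ x z) := by
  rw [← sub_eq_zero, ← h.nsl1 x y z]
  abel

/- The `∘∘` terms of the cyclic sum cancel by `nsl1`, and what remains is exactly `nsl2`. -/
theorem nsStar_jacobi (x y z : A) :
    nsStar circ vee (α x) (nsStar circ vee y z) + nsStar circ vee (α y) (nsStar circ vee z x) +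
      nsStar circ vee (α z) (nsStar circ vee x y) = 0 := by
  rw [nsStar.eq_1 circ vee (α x), nsStar.eq_1 circ vee (α y), nsStar.eq_1 circ vee (α z),
    h.circ_nsStar_left y z x, h.circ_nsStar_left z x y, h.circ_nsStar_left x y z,
    (h.lincirc.2 (α x)).map_nsStar, (h.lincirc.2 (α y)).map_nsStar,
    (h.lincirc.2 (α z)).map_nsStar, ← h.nsl2 x y z]
  abel

end IsNSHomLie

/-- the adjacent bracket of an NS-Hom-Lie algebra is a Hom-Lie algebra. -/
theorem NSHomLie_adjacent (circ vee : A → A → A) (α : A → A)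
    (h : IsNSHomLie K circ vee α) :
    IsHomLie K (nsStar circ vee) α :=
  ⟨h.linα, h.lincirc.nsStar h.linvee, nsStar_swap h.skewvee, h.nsStar_jacobi⟩

end HLYPaper
end

section
/- If T_t and T'_t are two equivalent formal deformations of an (F,G)-twisted O-operator T on a Hom-Lie-Yamaguti algebra, then their infinitesimals T_1 and T'_1 differ by a coboundary: T'_1(u) − T_1(u) = ∂_T(χ)(u) = T(D(χ)u + G(χ,Tu)) − [χ,Tu] for some χ ∈ A∧A; hence T_1 and T'_1 define the same class in the first cohomology group H^1_T(V,A). -/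
namespace HLYPaper

variable (K : Type*) [CommRing K]
variable {A V : Type*} [AddCommGroup A] [Module K A] [AddCommGroup V] [Module K V]

theorem sub_coeff_one_eq_of_sum_antidiagonal_one_eq {M N : Type*} [AddCommGroup M]
    (S S' : ℕ → N → M) (Φ : ℕ → M → M) (Ψ : ℕ → N → N) (hΦ0 : Φ 0 = id) (hΨ0 : Ψ 0 = id)
    (u : N)
    (hmor : ∑ p ∈ Finset.HasAntidiagonal.antidiagonal 1, S p.1 (Ψ p.2 u) =
      ∑ p ∈ Finset.HasAntidiagonal.antidiagonal 1, Φ p.1 (S' p.2 u)) :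
    S' 1 u - S 1 u = S 0 (Ψ 1 u) - Φ 1 (S' 0 u) := by
  simp only [Finset.Nat.sum_antidiagonal_succ, Finset.Nat.antidiagonal_zero,
    Finset.sum_singleton, zero_add, hΦ0, hΨ0, id] at hmor
  rw [sub_eq_sub_iff_add_eq_add, add_comm, hmor, add_comm]

theorem equivalent_deformations_same_class_general (b : A → A → A) (t : A → A → A → A)
    (α : A → A) (ρ : A → V → V) (θ : A → A → V → V) (β : V → V)
    (G : A → A → A → V) (T : V → A)
    (S S' : ℕ → V → A) (hS0 : S 0 = T) (hS'0 : S' 0 = T)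
    (χ : A × A) (Φ : ℕ → A → A) (Ψ : ℕ → V → V)
    (hΦ0 : Φ 0 = id) (hΨ0 : Ψ 0 = id)
    (hΦ1 : ∀ x, Φ 1 x = t χ.1 χ.2 x)
    (hΨ1 : ∀ u, Ψ 1 u = Dop b α β ρ θ χ.1 χ.2 u + G χ.1 χ.2 (T u))
    (hmor : ∀ s u, ∑ p ∈ Finset.HasAntidiagonal.antidiagonal s, S p.1 (Ψ p.2 u) =
      ∑ p ∈ Finset.HasAntidiagonal.antidiagonal s, Φ p.1 (S' p.2 u)) :
    ∀ u, S' 1 u - S 1 u = partialT b t α β ρ θ G T χ u := by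
  intro u
  rw [sub_coeff_one_eq_of_sum_antidiagonal_one_eq S S' Φ Ψ hΦ0 hΨ0 u (hmor 1 u), hS0, hS'0,
    hΦ1, hΨ1, partialT]

/-- the infinitesimals of two equivalent formal deformations of a twisted
O-operator differ by the coboundary `∂_T(χ)`, hence define the same cohomology class. -/
theorem equivalent_deformations_same_class (b : A → A → A) (t : A → A → A → A)
    (α : A → A) (ρ : A → V → V) (θ : A → A → V → V) (β : V → V)
    (F : A → A → V) (G : A → A → A → V)
    (h : IsHLY K b t α) (hr : IsHLYRep K b t α ρ θ β)
    (hc : Is23Cocycle K b t α ρ θ β F G) (T : V → A)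
    (hT : IsTwistedO K b t α ρ θ β F G T)
    (S S' : ℕ → V → A) (hS0 : S 0 = T) (hS'0 : S' 0 = T)
    (hd : IsFormalDef K b t α ρ θ β F G S) (hd' : IsFormalDef K b t α ρ θ β F G S')
    (χ : A × A) (Φ : ℕ → A → A) (Ψ : ℕ → V → V)
    (hΦ0 : Φ 0 = id) (hΨ0 : Ψ 0 = id)
    (hΦ1 : ∀ x, Φ 1 x = t χ.1 χ.2 x)
    (hΨ1 : ∀ u, Ψ 1 u = Dop b α β ρ θ χ.1 χ.2 u + G χ.1 χ.2 (T u))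
    (hmor : ∀ s u, ∑ p ∈ Finset.HasAntidiagonal.antidiagonal s, S p.1 (Ψ p.2 u) =
      ∑ p ∈ Finset.HasAntidiagonal.antidiagonal s, Φ p.1 (S' p.2 u)) :
    ∀ u, S' 1 u - S 1 u = partialT b t α β ρ θ G T χ u :=
  equivalent_deformations_same_class_general b t α ρ θ β G T S S' hS0 hS'0 χ Φ Ψ hΦ0 hΨ0 hΦ1 hΨ1
    hmor

end HLYPaper
end
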